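/- arXiv:math/0006134 — 2 statements merged into one kernel-verified Lean document; each statement's English description precedes it below -/
import Mathlib

section
/- Let (p_n) be a sequence with 2 < p_n < ∞ decreasing to 2 and let (k_n) be a sequence of positive integers. Then the space Z = (∑_{n=0}^∞ ℓ_{p_n}^{k_n})_2 is asymptotically Hilbertian: there is a constant K such that for every m ≥ 1 there is a closed subspace X_m of Z of finite codimension such that every m-dimensional subspace of X_m is K-isomorphic to ℓ₂^m. -/
open scoped ENNReal
open Module
set_option synthInstance.maxHeartbeats 1000000
set_option maxHeartbeats 1000000

/-- The finite-dimensional complex space `ℓ_p^k = (ℂ^k, ‖·‖_p)` (with `p` clamped below by `1`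
so that the `PiLp` instances apply; in our applications `2 < p`). -/
abbrev ellp (p : ℝ) (k : ℕ) : Type :=
  PiLp (ENNReal.ofReal (max p 1)) (fun _ : Fin k => ℂ)

instance (p : ℝ) : Fact ((1 : ℝ≥0∞) ≤ ENNReal.ofReal (max p 1)) :=
  ⟨by
    rw [show (1 : ℝ≥0∞) = ENNReal.ofReal 1 by simp]
    exact ENNReal.ofReal_le_ofReal (le_max_right _ _)⟩

/-- The ℓ₂-direct sum `Z = (∑_n ℓ_{p_n}^{k_n})₂`. -/
abbrev lpSum (p : ℕ → ℝ) (k : ℕ → ℕ) : Type :=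
  lp (fun n => ellp (p n) (k n)) 2

/-- A subspace `F` (of dimension `m`) is `K`-isomorphic to `ℓ₂^m` if there is a (continuous)
linear isomorphism `T : F ≃ ℓ₂^m` with `‖T‖ * ‖T⁻¹‖ ≤ K`. -/
def KIsomEuclidean (K : ℝ) {X : Type*} [NormedAddCommGroup X] [NormedSpace ℂ X]
    (F : Submodule ℂ X) (m : ℕ) : Prop :=
  ∃ T : F ≃L[ℂ] EuclideanSpace ℂ (Fin m),
    ‖(T : F →L[ℂ] EuclideanSpace ℂ (Fin m))‖ *
      ‖(T.symm : EuclideanSpace ℂ (Fin m) →L[ℂ] F)‖ ≤ K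

/-!
Fix `m` and choose `N` with `(4 ^ m) ^ (p N - 2) < 2`; take `X_m` to be the vectors vanishing
on the first `N` blocks. Let `F ≤ X_m` have dimension `m`. Its projection `W` to a block
`ℓ_p^k` with `n ≥ N` (so `p = p n ≤ p N`) has dimension at most `m`, hence contains vectors
`g_1, …, g_m` of norm `≤ 1` in which every `x ∈ W` has coefficients bounded by `2 ^ m * ‖x‖`.
With `h = ∑ i, |g_i|`, the weighted Euclidean norm `∑ j, h_j ^ (p - 2) * |x_j| ^ 2` is
comparable with `‖x‖_p ^ 2` on `W` up to the factor `(4 ^ m) ^ (p - 2)`: from below because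
`|x_j| ≤ 2 ^ m * ‖x‖ * h_j`, from above by Hölder since `‖h‖_p ≤ m`. Gluing the blocks in
`ℓ₂` embeds `F` into a Hilbert space with squared norms distorted by less than `2` either way,
so `F` is `2`-isomorphic to `ℓ₂^m`.
-/

theorem exists_bounded_spanning_family {𝕜 V : Type*} [RCLike 𝕜] [NormedAddCommGroup V]
    [NormedSpace 𝕜 V] (d : ℕ) (W : Submodule 𝕜 V) [FiniteDimensional 𝕜 W]
    (hW : finrank 𝕜 W ≤ d) :
    ∃ g : Fin d → V, (∀ i, ‖g i‖ ≤ 1) ∧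
      ∀ x ∈ W, ∃ a : Fin d → 𝕜, x = ∑ i, a i • g i ∧ ∀ i, ‖a i‖ ≤ 2 ^ d * ‖x‖ := by
  induction d generalizing W with
  | zero =>
    have hx0 : ∀ x ∈ W, x = 0 := by
      rw [Submodule.finrank_eq_zero.1 (Nat.le_zero.1 hW)]
      exact fun x hx => hx
    exact ⟨0, by simp, fun x hx => ⟨0, by simp [hx0 x hx], by simp⟩⟩
  | succ d ih =>
    rcases eq_or_ne W ⊥ with rfl | hW0
    · exact ⟨0, by simp, fun x hx => ⟨0, by simpa using hx, by simp⟩⟩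
    obtain ⟨w, hwW, hw0⟩ := Submodule.exists_mem_ne_zero_of_ne_bot hW0
    set u := (‖w‖⁻¹ : 𝕜) • w
    have hu : ‖u‖ = 1 := norm_smul_inv_norm hw0
    have huW : u ∈ W := W.smul_mem _ hwW
    obtain ⟨φ, hφ, hφu⟩ := exists_dual_vector 𝕜 u (norm_ne_zero_iff.1 (by simp [hu]))
    replace hφu : φ u = 1 := by simp [hφu, hu]
    have hW' : finrank 𝕜 ↥(W ⊓ LinearMap.ker (φ : V →ₗ[𝕜] 𝕜)) ≤ d := by
      have hlt : W ⊓ LinearMap.ker (φ : V →ₗ[𝕜] 𝕜) < W :=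
        inf_le_left.lt_of_not_ge fun h => by simpa [hφu] using (h huW).2
      have := Submodule.finrank_lt_finrank_of_lt hlt
      omega
    obtain ⟨g, hg, hrep⟩ := ih _ hW'
    refine ⟨Fin.cons u g, Fin.forall_fin_succ.2 ⟨by simp [hu], by simpa using hg⟩,
      fun x hx => ?_⟩
    obtain ⟨a, hxa, ha⟩ := hrep (x - φ x • u)
      ⟨W.sub_mem hx (W.smul_mem _ huW), by simp [hφu]⟩
    have hφx : ‖φ x‖ ≤ ‖x‖ := by simpa [hφ] using φ.le_opNorm x
    have hy : ‖x - φ x • u‖ ≤ 2 * ‖x‖ := by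
      calc ‖x - φ x • u‖ ≤ ‖x‖ + ‖φ x‖ := by
            simpa [norm_smul, hu] using norm_sub_le x (φ x • u)
        _ ≤ 2 * ‖x‖ := by linarith
    refine ⟨Fin.cons (φ x) a, by simp [Fin.sum_univ_succ, ← hxa],
      Fin.forall_fin_succ.2 ⟨?_, ?_⟩⟩
    · have : (1 : ℝ) ≤ 2 ^ (d + 1) := one_le_pow₀ one_le_two
      simpa using hφx.trans (le_mul_of_one_le_left (norm_nonneg x) this)
    · intro i
      calc ‖(Fin.cons (φ x) a : Fin (d + 1) → 𝕜) i.succ‖ = ‖a i‖ := by simp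
        _ ≤ 2 ^ d * (2 * ‖x‖) := (ha i).trans (by gcongr)
        _ = 2 ^ (d + 1) * ‖x‖ := by ring

def SqNormEquivOn {E H : Type*} [Norm E] [Norm H] (c : ℝ) (f : E → H) (s : Set E) : Prop :=
  ∀ x ∈ s, c⁻¹ * ‖x‖ ^ 2 ≤ ‖f x‖ ^ 2 ∧ ‖f x‖ ^ 2 ≤ c * ‖x‖ ^ 2

namespace SqNormEquivOn

variable {E H : Type*} [SeminormedAddGroup E] [SeminormedAddGroup H] {c c' : ℝ} {f : E → H}
  {s : Set E}

theorem mono_const (hf : SqNormEquivOn c f s) (hc : 0 < c) (hcc' : c ≤ c') :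
    SqNormEquivOn c' f s := fun x hx =>
  ⟨le_trans (by gcongr) (hf x hx).1, (hf x hx).2.trans (by gcongr)⟩

theorem norm_map_le (hf : SqNormEquivOn c f s) (hc : 0 ≤ c) {x : E} (hx : x ∈ s) :
    ‖f x‖ ≤ √c * ‖x‖ := by
  simpa [Real.sqrt_mul hc] using Real.le_sqrt_of_sq_le (hf x hx).2

theorem norm_le_norm_map (hf : SqNormEquivOn c f s) (hc : 0 < c) {x : E} (hx : x ∈ s) :
    ‖x‖ ≤ √c * ‖f x‖ := by
  have h : ‖x‖ ^ 2 ≤ c * ‖f x‖ ^ 2 := (inv_mul_le_iff₀ hc).1 (hf x hx).1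
  simpa [Real.sqrt_mul hc.le] using Real.le_sqrt_of_sq_le h

end SqNormEquivOn

theorem kIsomEuclidean_of_sqNormEquivOn {X H : Type*} [NormedAddCommGroup X]
    [NormedSpace ℂ X] [NormedAddCommGroup H] [InnerProductSpace ℂ H] {F : Submodule ℂ X}
    [FiniteDimensional ℂ F] {m : ℕ} (hm : finrank ℂ F = m) {c : ℝ} (hc : 0 < c) (Φ : F →ₗ[ℂ] H)
    (hΦ : SqNormEquivOn c Φ Set.univ) : KIsomEuclidean c F m := by
  have hinj : Function.Injective Φ := (injective_iff_map_eq_zero Φ).2 fun u hu => by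
    have h := (hΦ u trivial).1
    rw [hu, norm_zero, zero_pow two_ne_zero] at h
    have h2 : ‖u‖ ^ 2 ≤ 0 := nonpos_of_mul_nonpos_right h (inv_pos.2 hc)
    simpa using h2
  have hrange : finrank ℂ (LinearMap.range Φ) = m := by
    rw [LinearMap.finrank_range_of_inj hinj, hm]
  let e := ((stdOrthonormalBasis ℂ (LinearMap.range Φ)).reindex (finCongr hrange)).repr
  let T := ((LinearEquiv.ofInjective Φ hinj).trans e.toLinearEquiv).toContinuousLinearEquiv
  have hT : ∀ u, ‖T u‖ = ‖Φ u‖ := fun u => by simp [T]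
  refine ⟨T, ?_⟩
  calc _ ≤ √c * √c := by
        gcongr
        · refine ContinuousLinearMap.opNorm_le_bound _ (Real.sqrt_nonneg c) fun u => ?_
          simpa [hT] using hΦ.norm_map_le hc.le (Set.mem_univ u)
        · refine ContinuousLinearMap.opNorm_le_bound _ (Real.sqrt_nonneg c) fun y => ?_
          have h := hΦ.norm_le_norm_map hc (Set.mem_univ (T.symm y))
          rwa [← hT, T.apply_symm_apply] at h
    _ = c := Real.mul_self_sqrt hc.le

theorem Real.rpow_sub_two_mul_sq {a p : ℝ} (ha : 0 ≤ a) (hp : p ≠ 0) :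
    a ^ (p - 2) * a ^ 2 = a ^ p := by
  rw [← Real.rpow_two, ← Real.rpow_add' ha (by simpa using hp), sub_add_cancel]

namespace ellp

variable {p : ℝ} {k : ℕ}

theorem norm_eq_sum (hp : 1 ≤ p) (x : ellp p k) : ‖x‖ = (∑ j, ‖x j‖ ^ p) ^ (1 / p) := by
  have h : (ENNReal.ofReal (max p 1)).toReal = p := by
    rw [max_eq_left hp, ENNReal.toReal_ofReal (by linarith)]
  have := PiLp.norm_eq_sum (by rw [h]; linarith) x
  rwa [h] at this

theorem norm_eq_of_forall_norm_eq (hp : 1 ≤ p) {x y : ellp p k} (h : ∀ j, ‖x j‖ = ‖y j‖) :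
    ‖x‖ = ‖y‖ := by
  simp only [norm_eq_sum hp, h]

theorem norm_rpow_eq_sum (hp : 1 ≤ p) (x : ellp p k) : ‖x‖ ^ p = ∑ j, ‖x j‖ ^ p := by
  rw [norm_eq_sum hp, ← Real.rpow_mul (by positivity),
    one_div_mul_cancel (by linarith), Real.rpow_one]

theorem sum_rpow_sum_norm_le (hp : 1 ≤ p) {d : ℕ} (g : Fin d → ellp p k) :
    ∑ j, (∑ i, ‖g i j‖) ^ p ≤ (∑ i, ‖g i‖) ^ p := by
  let v : Fin d → ellp p k := fun i => WithLp.toLp _ fun j => (‖g i j‖ : ℂ)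
  have hv : ∀ j, ‖(∑ i, v i) j‖ = ∑ i, ‖g i j‖ := fun j => by
    rw [WithLp.ofLp_sum, Finset.sum_apply, ← Complex.ofReal_sum, Complex.norm_real,
      Real.norm_of_nonneg (by positivity)]
  calc ∑ j, (∑ i, ‖g i j‖) ^ p = ‖∑ i, v i‖ ^ p := by simp only [norm_rpow_eq_sum hp, hv]
    _ ≤ (∑ i, ‖v i‖) ^ p := by gcongr; exact norm_sum_le _ _
    _ = (∑ i, ‖g i‖) ^ p := by
      congr 1
      exact Finset.sum_congr rfl fun i _ => norm_eq_of_forall_norm_eq hp fun j => by simp [v]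

theorem sq_norm_le_of_norm_apply_le (hp : 2 ≤ p) {x : ellp p k} {c : ℝ} {h : Fin k → ℝ}
    (hc : 0 ≤ c) (hh : ∀ j, 0 ≤ h j) (hx : ∀ j, ‖x j‖ ≤ c * ‖x‖ * h j) :
    ‖x‖ ^ 2 ≤ c ^ (p - 2) * ∑ j, h j ^ (p - 2) * ‖x j‖ ^ 2 := by
  rcases (norm_nonneg x).eq_or_lt with hx0 | hx0
  · rw [← hx0, zero_pow two_ne_zero]
    exact mul_nonneg (Real.rpow_nonneg hc _)
      (Finset.sum_nonneg fun j _ => mul_nonneg (Real.rpow_nonneg (hh j) _) (sq_nonneg _))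
  refine le_of_mul_le_mul_left ?_ (Real.rpow_pos_of_pos hx0 (p - 2))
  calc ‖x‖ ^ (p - 2) * ‖x‖ ^ 2 = ∑ j, ‖x j‖ ^ (p - 2) * ‖x j‖ ^ 2 := by
        simp only [Real.rpow_sub_two_mul_sq (norm_nonneg _) (by linarith : p ≠ 0),
          norm_rpow_eq_sum (by linarith : 1 ≤ p)]
    _ ≤ ∑ j, (c * ‖x‖ * h j) ^ (p - 2) * ‖x j‖ ^ 2 := by
        gcongr with j
        exact hx j
    _ = ‖x‖ ^ (p - 2) * (c ^ (p - 2) * ∑ j, h j ^ (p - 2) * ‖x j‖ ^ 2) := by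
        rw [Finset.mul_sum, Finset.mul_sum]
        refine Finset.sum_congr rfl fun j _ => ?_
        rw [Real.mul_rpow (by positivity) (hh j), Real.mul_rpow hc (norm_nonneg x)]
        ring

theorem sum_rpow_mul_sq_le (hp : 2 < p) (x : ellp p k) {h : Fin k → ℝ} (hh : ∀ j, 0 ≤ h j) :
    ∑ j, h j ^ (p - 2) * ‖x j‖ ^ 2 ≤ (∑ j, h j ^ p) ^ ((p - 2) / p) * ‖x‖ ^ 2 := by
  have hpq : (p / (p - 2)).HolderConjugate (p / 2) := by
    rw [Real.holderConjugate_iff, inv_div, inv_div, ← add_div, sub_add_cancel,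
      div_self (by linarith)]
    exact ⟨by rw [lt_div_iff₀ (by linarith)]; linarith, rfl⟩
  have hp0 : p ≠ 0 := by linarith
  calc _ ≤ (∑ j, (h j ^ (p - 2)) ^ (p / (p - 2))) ^ (1 / (p / (p - 2))) *
        (∑ j, (‖x j‖ ^ 2) ^ (p / 2)) ^ (1 / (p / 2)) :=
      Real.inner_le_Lp_mul_Lq_of_nonneg Finset.univ hpq
        (fun j _ => Real.rpow_nonneg (hh j) (p - 2)) (fun j _ => sq_nonneg ‖x j‖)
    _ = _ := by
      have hpow : ∀ j, (h j ^ (p - 2)) ^ (p / (p - 2)) = h j ^ p := fun j => by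
        rw [← Real.rpow_mul (hh j), mul_div_cancel₀ _ (by linarith)]
      have hnorm : ∀ j, (‖x j‖ ^ 2) ^ (p / 2) = ‖x j‖ ^ p := fun j => by
        rw [← Real.rpow_two, ← Real.rpow_mul (norm_nonneg _), mul_div_cancel₀ _ two_ne_zero]
      simp only [hpow, hnorm, one_div_div, ← norm_rpow_eq_sum (by linarith : 1 ≤ p)]
      rw [← Real.rpow_mul (norm_nonneg _), mul_div_cancel₀ _ hp0, Real.rpow_two]

noncomputable def weightedL2 (w : Fin k → ℝ) : ellp p k →ₗ[ℂ] EuclideanSpace ℂ (Fin k) where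
  toFun x := WithLp.toLp 2 fun j => (√(w j) : ℂ) * x j
  map_add' x y := by ext j; simp [mul_add]
  map_smul' c x := by ext j; simp [mul_left_comm]

theorem norm_weightedL2_sq {w : Fin k → ℝ} (hw : ∀ j, 0 ≤ w j) (x : ellp p k) :
    ‖weightedL2 w x‖ ^ 2 = ∑ j, w j * ‖x j‖ ^ 2 := by
  rw [EuclideanSpace.norm_sq_eq]
  refine Finset.sum_congr rfl fun j _ => ?_
  simp [weightedL2, mul_pow, Real.sq_sqrt (hw j)]

theorem exists_sqNormEquivOn_euclidean (hp : 2 < p) {m : ℕ} (W : Submodule ℂ (ellp p k))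
    (hW : finrank ℂ W ≤ m) :
    ∃ L : ellp p k →ₗ[ℂ] EuclideanSpace ℂ (Fin k),
      SqNormEquivOn (((4 : ℝ) ^ m) ^ (p - 2)) L W := by
  obtain ⟨g, hg, hrep⟩ := exists_bounded_spanning_family m W hW
  set h : Fin k → ℝ := fun j => ∑ i, ‖g i j‖
  have hh : ∀ j, 0 ≤ h j := fun j => Finset.sum_nonneg fun i _ => norm_nonneg _
  refine ⟨weightedL2 fun j => h j ^ (p - 2), fun x hx => ?_⟩
  rw [norm_weightedL2_sq fun j => Real.rpow_nonneg (hh j) _]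
  have hc : 0 < ((4 : ℝ) ^ m) ^ (p - 2) := by positivity
  have h2m : (2 : ℝ) ^ m ≤ 4 ^ m := pow_le_pow_left₀ zero_le_two (by norm_num) m
  have hm : (m : ℝ) ≤ 4 ^ m :=
    le_trans (by exact_mod_cast Nat.lt_two_pow_self.le) h2m
  constructor
  · rw [inv_mul_le_iff₀ hc]
    obtain ⟨a, rfl, ha⟩ := hrep x hx
    refine (sq_norm_le_of_norm_apply_le hp.le (c := 2 ^ m) (by positivity) hh
      fun j => ?_).trans ?_
    · calc ‖(∑ i, a i • g i : ellp p k) j‖ = ‖∑ i, a i * g i j‖ := by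
            simp [WithLp.ofLp_sum]
        _ ≤ ∑ i, ‖a i‖ * ‖g i j‖ := by
          simpa only [norm_mul] using norm_sum_le Finset.univ fun i => a i * g i j
        _ ≤ ∑ i, 2 ^ m * ‖∑ i, a i • g i‖ * ‖g i j‖ := by gcongr with i; exact ha i
        _ = 2 ^ m * ‖∑ i, a i • g i‖ * h j := by rw [Finset.mul_sum]
    · exact mul_le_mul_of_nonneg_right (Real.rpow_le_rpow (by positivity) h2m (by linarith))
        (Finset.sum_nonneg fun j _ => mul_nonneg (Real.rpow_nonneg (hh j) _) (sq_nonneg _))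
  · refine (sum_rpow_mul_sq_le hp x hh).trans (mul_le_mul_of_nonneg_right ?_ (sq_nonneg _))
    have hgm : ∑ i, ‖g i‖ ≤ m := (Finset.sum_le_sum fun i _ => hg i).trans (by simp)
    calc (∑ j, h j ^ p) ^ ((p - 2) / p) ≤ ((∑ i, ‖g i‖) ^ p) ^ ((p - 2) / p) := by
          gcongr
          exact sum_rpow_sum_norm_le (by linarith) g
      _ = (∑ i, ‖g i‖) ^ (p - 2) := by
          rw [← Real.rpow_mul (by positivity), mul_div_cancel₀ _ (by linarith)]
      _ ≤ (4 ^ m) ^ (p - 2) := by gcongr; exact hgm.trans hm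

end ellp

namespace lp

variable {𝕜 ι : Type*} [NormedField 𝕜] {E H : ι → Type*}
  [∀ i, NormedAddCommGroup (E i)] [∀ i, NormedSpace 𝕜 (E i)]
  [∀ i, NormedAddCommGroup (H i)] [∀ i, NormedSpace 𝕜 (H i)]

theorem hasSum_norm_sq (f : lp E 2) : HasSum (fun i => ‖f i‖ ^ 2) (‖f‖ ^ 2) := by
  simpa [Real.rpow_two] using hasSum_norm (p := 2) (by norm_num) f

theorem exists_sqNormEquivOn {c : ℝ} (L : ∀ i, E i →ₗ[𝕜] H i) (F : Submodule 𝕜 (lp E 2))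
    (hL : ∀ i, SqNormEquivOn c (L i) (F.map (evalₗ E 2 i) : Set (E i))) :
    ∃ Φ : F →ₗ[𝕜] lp H 2, SqNormEquivOn c Φ Set.univ := by
  have hL' : ∀ u : F, ∀ i, SqNormEquivOn c (L i) {(u : lp E 2) i} := fun u i _ hy =>
    hL i _ ⟨u, u.2, hy.symm⟩
  have hmem : ∀ u : F, Memℓp (fun i => L i ((u : lp E 2) i)) 2 := fun u => by
    refine memℓp_gen ?_
    simp only [ENNReal.toReal_ofNat, Real.rpow_two]
    exact Summable.of_nonneg_of_le (fun i => sq_nonneg _)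
      (fun i => (hL' u i _ rfl).2) ((hasSum_norm_sq (u : lp E 2)).summable.mul_left c)
  let Φ : F →ₗ[𝕜] lp H 2 :=
    { toFun u := ⟨fun i => L i ((u : lp E 2) i), hmem u⟩
      map_add' u v := by ext i; exact (L i).map_add _ _
      map_smul' a u := by ext i; simp }
  refine ⟨Φ, fun u _ => ⟨?_, ?_⟩⟩
  · exact hasSum_le (fun i => (hL' u i _ rfl).1)
      ((hasSum_norm_sq (u : lp E 2)).mul_left c⁻¹) (hasSum_norm_sq (Φ u))
  · exact hasSum_le (fun i => (hL' u i _ rfl).2)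
      (hasSum_norm_sq (Φ u)) ((hasSum_norm_sq (u : lp E 2)).mul_left c)

end lp

theorem lpSum.exists_sqNormEquivOn_block {p : ℕ → ℝ} {k : ℕ → ℕ} (hp2 : ∀ n, 2 < p n)
    (hpdec : Antitone p) {m N : ℕ} (F : Submodule ℂ (lpSum p k)) [FiniteDimensional ℂ F]
    (hFm : finrank ℂ F ≤ m) (hF : ∀ x ∈ F, ∀ n < N, x n = 0) (n : ℕ) :
    ∃ L : ellp (p n) (k n) →ₗ[ℂ] EuclideanSpace ℂ (Fin (k n)),
      SqNormEquivOn (((4 : ℝ) ^ m) ^ (p N - 2)) L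
        (F.map (lp.evalₗ (fun n => ellp (p n) (k n)) 2 n) : Set (ellp (p n) (k n))) := by
  rcases lt_or_ge n N with hn | hn
  · refine ⟨0, ?_⟩
    rintro _ ⟨x, hx, rfl⟩
    simp [hF x hx n hn]
  · obtain ⟨L, hL⟩ := ellp.exists_sqNormEquivOn_euclidean (hp2 n) _
      ((Submodule.finrank_map_le _ F).trans hFm)
    exact ⟨L, hL.mono_const (by positivity)
      (Real.rpow_le_rpow_of_exponent_le (one_le_pow₀ (by norm_num)) (by linarith [hpdec hn]))⟩

theorem lpSum_asympHilbertian_general (p : ℕ → ℝ) (k : ℕ → ℕ)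
    (hp2 : ∀ n, 2 < p n) (hpdec : Antitone p)
    (hplim : Filter.Tendsto p Filter.atTop (nhds 2)) :
    ∃ K : ℝ, ∀ m : ℕ, 1 ≤ m → ∃ Xm : Submodule ℂ (lpSum p k),
      IsClosed (Xm : Set (lpSum p k)) ∧
      FiniteDimensional ℂ (lpSum p k ⧸ Xm) ∧
      ∀ F : Submodule ℂ (lpSum p k), F ≤ Xm → finrank ℂ F = m → KIsomEuclidean K F m := by
  refine ⟨2, fun m hm => ?_⟩
  obtain ⟨N, hN⟩ : ∃ N, ((4 : ℝ) ^ m) ^ (p N - 2) < 2 := by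
    have h := (Real.continuousAt_const_rpow (a := (4 : ℝ) ^ m) (by positivity)).tendsto.comp
      (hplim.sub_const 2)
    rw [sub_self, Real.rpow_zero] at h
    exact (h.eventually (gt_mem_nhds one_lt_two)).exists
  let head := ContinuousLinearMap.pi fun n : Fin N =>
    lp.evalCLM ℂ (fun n => ellp (p n) (k n)) 2 n
  refine ⟨head.ker, head.isClosed_ker,
    Module.Finite.equiv (LinearMap.quotKerEquivRange head.toLinearMap).symm,
    fun F hF hFm => ?_⟩
  have : FiniteDimensional ℂ F := FiniteDimensional.of_finrank_pos (by omega)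
  choose L hL using lpSum.exists_sqNormEquivOn_block hp2 hpdec F hFm.le
    fun x hx n hn => congr_fun (hF hx) ⟨n, hn⟩
  obtain ⟨Φ, hΦ⟩ := lp.exists_sqNormEquivOn L F hL
  obtain ⟨T, hT⟩ := kIsomEuclidean_of_sqNormEquivOn hFm (by positivity) Φ hΦ
  exact ⟨T, hT.trans hN.le⟩

/-- If `2 < p_n < ∞` decreases to `2` and `k_n ≥ 1`, then `Z = (∑_n ℓ_{p_n}^{k_n})₂` is
asymptotically Hilbertian: for some constant `K`, for every `m ≥ 1` there is a closed
finite-codimensional subspace `X_m` of `Z` all of whose `m`-dimensional subspaces are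
`K`-isomorphic to `ℓ₂^m`. -/
theorem lpSum_asympHilbertian (p : ℕ → ℝ) (k : ℕ → ℕ)
    (hp2 : ∀ n, 2 < p n) (hpdec : Antitone p)
    (hplim : Filter.Tendsto p Filter.atTop (nhds 2)) (hk : ∀ n, 0 < k n) :
    ∃ K : ℝ, ∀ m : ℕ, 1 ≤ m → ∃ Xm : Submodule ℂ (lpSum p k),
      IsClosed (Xm : Set (lpSum p k)) ∧
      FiniteDimensional ℂ (lpSum p k ⧸ Xm) ∧
      ∀ F : Submodule ℂ (lpSum p k), F ≤ Xm → finrank ℂ F = m → KIsomEuclidean K F m :=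
  lpSum_asympHilbertian_general p k hp2 hpdec hplim
end

section
/- Let (p_n) be a sequence with 2 < p_n < ∞ and (k_n) a sequence of positive integers. If the sequence k_n^{1/2 − 1/p_n} is bounded, then Z = (∑_{n=0}^∞ ℓ_{p_n}^{k_n})_2 is isomorphic to ℓ₂, i.e., there exists a continuous linear equivalence between Z and the complex Hilbert space ℓ₂(ℕ). -/
open scoped ENNReal
set_option synthInstance.maxHeartbeats 1000000
set_option maxHeartbeats 1000000

/-!
For `2 ≤ p` and `x ∈ ℂᵏ` one has `‖x‖_p ≤ ‖x‖_2 ≤ k ^ (1/2 - 1/p) ‖x‖_p`: the first inequality is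
superadditivity of `t ↦ t ^ (p/2)`, the second is Hölder's inequality. Hence, when
`k_n ^ (1/2 - 1/p_n)` is bounded, the identity maps `ℓ_{p_n}^{k_n} → ℓ_2^{k_n}` are uniformly
bounded isomorphisms with uniformly bounded inverses, and they assemble into an isomorphism of `Z`
with `(∑ ℓ_2^{k_n})₂`. The latter is a Hilbert space whose unit vectors `e_{n,j}` form a Hilbert
basis indexed by the countably infinite set `{(n, j) : j < k_n}`, so it is isometric to `ℓ₂`.
-/

open scoped NNReal
open Finset WithLp

namespace NNReal

variable {ι : Type*} (s : Finset ι) (f : ι → ℝ≥0) {p q : ℝ}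

theorem sum_rpow_le_rpow_sum (hp : 1 ≤ p) : ∑ i ∈ s, f i ^ p ≤ (∑ i ∈ s, f i) ^ p := by
  classical
  induction s using Finset.induction_on with
  | empty => simp [NNReal.zero_rpow (by linarith : p ≠ 0)]
  | insert i s hi ih =>
    rw [sum_insert hi, sum_insert hi]
    exact (add_le_add_right ih _).trans (add_rpow_le_rpow_add _ _ hp)

theorem Lq_le_Lp_of_le (hp : 0 < p) (hpq : p ≤ q) :
    (∑ i ∈ s, f i ^ q) ^ (1 / q) ≤ (∑ i ∈ s, f i ^ p) ^ (1 / p) := by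
  have hq : 0 < q := hp.trans_le hpq
  calc (∑ i ∈ s, f i ^ q) ^ (1 / q)
      = (∑ i ∈ s, (f i ^ p) ^ (q / p)) ^ (1 / q) := by
        simp_rw [← rpow_mul, mul_div_cancel₀ _ hp.ne']
    _ ≤ ((∑ i ∈ s, f i ^ p) ^ (q / p)) ^ (1 / q) := by
        gcongr
        exact sum_rpow_le_rpow_sum _ _ ((one_le_div hp).2 hpq)
    _ = (∑ i ∈ s, f i ^ p) ^ (1 / p) := by
        rw [← rpow_mul]
        congr 1
        field_simp

theorem Lp_le_card_rpow_mul_Lq (hp : 0 < p) (hpq : p ≤ q) :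
    (∑ i ∈ s, f i ^ p) ^ (1 / p) ≤ (#s : ℝ≥0) ^ (1 / p - 1 / q) * (∑ i ∈ s, f i ^ q) ^ (1 / q) := by
  have holder := inner_le_weight_mul_Lp s ((one_le_div hp).2 hpq) (fun _ => 1) (fun i => f i ^ p)
  simp only [one_mul, sum_const, nsmul_eq_mul, mul_one, ← rpow_mul,
    mul_div_cancel₀ _ hp.ne'] at holder
  calc (∑ i ∈ s, f i ^ p) ^ (1 / p)
      ≤ ((#s : ℝ≥0) ^ (1 - (q / p)⁻¹) * (∑ i ∈ s, f i ^ q) ^ (q / p)⁻¹) ^ (1 / p) := by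
        gcongr
    _ = (#s : ℝ≥0) ^ (1 / p - 1 / q) * (∑ i ∈ s, f i ^ q) ^ (1 / q) := by
        rw [mul_rpow, ← rpow_mul, ← rpow_mul]
        congr 2 <;> field_simp

end NNReal

namespace PiLp

variable (𝕜 : Type*) {ι : Type*} (β : ι → Type*) [NontriviallyNormedField 𝕜]
  [∀ i, SeminormedAddCommGroup (β i)] [∀ i, NormedSpace 𝕜 (β i)] (p q : ℝ≥0∞)

noncomputable def exponentCLE : PiLp p β ≃L[𝕜] PiLp q β :=
  (continuousLinearEquiv p 𝕜 β).trans (continuousLinearEquiv q 𝕜 β).symm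

variable [Fintype ι] {𝕜 β p q} [Fact (1 ≤ p)] [Fact (1 ≤ q)]

theorem norm_toLp_ofLp_le_of_le (hpq : p ≤ q) (hq : q ≠ ∞) (x : PiLp p β) :
    ‖toLp q (ofLp x)‖ ≤ ‖x‖ := by
  have hp : p ≠ ∞ := ne_top_of_le_ne_top hq hpq
  rw [← coe_nnnorm, ← coe_nnnorm, NNReal.coe_le_coe, nnnorm_eq_sum hq, nnnorm_eq_sum hp]
  exact NNReal.Lq_le_Lp_of_le _ _ (ENNReal.toReal_pos (one_pos.trans_le Fact.out).ne' hp)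
    (ENNReal.toReal_mono hq hpq)

theorem norm_toLp_ofLp_le_card_rpow_mul (hpq : p ≤ q) (hq : q ≠ ∞) (x : PiLp q β) :
    ‖toLp p (ofLp x)‖ ≤ (Fintype.card ι : ℝ) ^ (1 / p.toReal - 1 / q.toReal) * ‖x‖ := by
  have hp : p ≠ ∞ := ne_top_of_le_ne_top hq hpq
  rw [← coe_nnnorm, ← coe_nnnorm, ← NNReal.coe_natCast, ← NNReal.coe_rpow, ← NNReal.coe_mul,
    NNReal.coe_le_coe, nnnorm_eq_sum hq, nnnorm_eq_sum hp]
  exact NNReal.Lp_le_card_rpow_mul_Lq _ _ (ENNReal.toReal_pos (one_pos.trans_le Fact.out).ne' hp)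
    (ENNReal.toReal_mono hq hpq)

theorem norm_exponentCLE_le_one (hpq : p ≤ q) (hq : q ≠ ∞) :
    ‖(exponentCLE 𝕜 β p q : PiLp p β →L[𝕜] PiLp q β)‖ ≤ 1 :=
  ContinuousLinearMap.opNorm_le_bound _ zero_le_one fun x =>
    (norm_toLp_ofLp_le_of_le hpq hq x).trans_eq (one_mul _).symm

theorem norm_exponentCLE_le_card_rpow (hpq : p ≤ q) (hq : q ≠ ∞) :
    ‖(exponentCLE 𝕜 β q p : PiLp q β →L[𝕜] PiLp p β)‖ ≤
      (Fintype.card ι : ℝ) ^ (1 / p.toReal - 1 / q.toReal) :=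
  ContinuousLinearMap.opNorm_le_bound _ (by positivity) fun x =>
    norm_toLp_ofLp_le_card_rpow_mul hpq hq x

end PiLp

namespace lp

section

variable {α 𝕜 : Type*} {E F : α → Type*} [NontriviallyNormedField 𝕜]
  [∀ i, NormedAddCommGroup (E i)] [∀ i, NormedSpace 𝕜 (E i)]
  [∀ i, NormedAddCommGroup (F i)] [∀ i, NormedSpace 𝕜 (F i)]

noncomputable def congrCLE (p : ℝ≥0∞) [Fact (1 ≤ p)] (e : ∀ i, E i ≃L[𝕜] F i) {C D : ℝ}
    (hC : 0 ≤ C) (hD : 0 ≤ D) (heC : ∀ i, ‖(e i : E i →L[𝕜] F i)‖ ≤ C)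
    (heD : ∀ i, ‖((e i).symm : F i →L[𝕜] E i)‖ ≤ D) : lp E p ≃L[𝕜] lp F p :=
  ContinuousLinearEquiv.equivOfInverse (mapCLM p (fun i => e i) hC heC)
    (mapCLM p (fun i => (e i).symm) hD heD) (fun x => by ext i; simp) (fun y => by ext i; simp)

end

section

variable {𝕜 ι : Type*} [RCLike 𝕜] [DecidableEq ι] {κ : ι → Type*} [∀ i, Fintype (κ i)]
  [∀ i, DecidableEq (κ i)]

variable (𝕜 κ) in
noncomputable def sigmaSingle (s : Σ i, κ i) : lp (fun i => EuclideanSpace 𝕜 (κ i)) 2 :=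
  lp.single 2 s.1 (EuclideanSpace.single s.2 1)

theorem inner_sigmaSingle_left (s : Σ i, κ i) (x : lp (fun i => EuclideanSpace 𝕜 (κ i)) 2) :
    inner 𝕜 (sigmaSingle 𝕜 κ s) x = x s.1 s.2 := by
  simp [sigmaSingle, lp.inner_single_left, EuclideanSpace.inner_single_left]

theorem orthonormal_sigmaSingle : Orthonormal 𝕜 (sigmaSingle 𝕜 κ) := by
  rw [orthonormal_iff_ite]
  rintro ⟨i, a⟩ ⟨j, b⟩
  rw [inner_sigmaSingle_left]
  rcases eq_or_ne i j with rfl | h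
  · simp [sigmaSingle]
  · simp [sigmaSingle, h]

theorem orthogonal_span_sigmaSingle :
    (Submodule.span 𝕜 (Set.range (sigmaSingle 𝕜 κ)))ᗮ = ⊥ := by
  rw [Submodule.eq_bot_iff]
  intro x hx
  ext i j
  rw [← inner_sigmaSingle_left ⟨i, j⟩]
  exact Submodule.inner_right_of_mem_orthogonal (Submodule.subset_span (Set.mem_range_self _)) hx

variable (𝕜 κ) in
noncomputable def sigmaHilbertBasis :
    HilbertBasis (Σ i, κ i) 𝕜 (lp (fun i => EuclideanSpace 𝕜 (κ i)) 2) :=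
  HilbertBasis.mkOfOrthogonalEqBot orthonormal_sigmaSingle orthogonal_span_sigmaSingle

end

end lp

noncomputable def HilbertBasis.reindex {ι ι' 𝕜 E : Type*} [RCLike 𝕜] [NormedAddCommGroup E]
    [InnerProductSpace 𝕜 E] [CompleteSpace E] (b : HilbertBasis ι 𝕜 E) (e : ι ≃ ι') :
    HilbertBasis ι' 𝕜 E :=
  HilbertBasis.mk (b.orthonormal.comp e.symm e.symm.injective) <| by
    rw [Set.range_comp, e.symm.range_eq_univ, Set.image_univ, b.dense_span]

/-- If `2 < p_n < ∞`, `k_n ≥ 1`, and the sequence `k_n ^ (1/2 - 1/p_n)` is bounded, then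
`Z = (∑_n ℓ_{p_n}^{k_n})₂` is isomorphic (continuously linearly equivalent) to complex
`ℓ₂(ℕ)`. -/
theorem lpSum_isomorphic_ell2 (p : ℕ → ℝ) (k : ℕ → ℕ)
    (hp2 : ∀ n, 2 < p n) (hk : ∀ n, 0 < k n)
    (hbdd : ∃ B : ℝ, ∀ n, (k n : ℝ) ^ (1 / 2 - 1 / p n) ≤ B) :
    Nonempty (lpSum p k ≃L[ℂ] lp (fun _ : ℕ => ℂ) 2) := by
  obtain ⟨B, hB⟩ := hbdd
  have hp : ∀ n, (ENNReal.ofReal (max (p n) 1)).toReal = p n := fun n => by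
    rw [ENNReal.toReal_ofReal (by positivity), max_eq_left (by linarith [hp2 n])]
  have h2p : ∀ n, (2 : ℝ≥0∞) ≤ ENNReal.ofReal (max (p n) 1) := fun n => by
    rw [← ENNReal.ofReal_ofNat]
    exact ENNReal.ofReal_le_ofReal ((hp2 n).le.trans (le_max_left _ _))
  let toEuclidean : lpSum p k ≃L[ℂ] lp (fun n => EuclideanSpace ℂ (Fin (k n))) 2 :=
    lp.congrCLE 2 (fun n => PiLp.exponentCLE ℂ _ _ 2) ((hB 0).trans' (by positivity)) zero_le_one
      (fun n => (PiLp.norm_exponentCLE_le_card_rpow (h2p n) ENNReal.ofReal_ne_top).trans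
        (by rw [hp, Fintype.card_fin, ENNReal.toReal_ofNat]; exact hB n))
      (fun n => PiLp.norm_exponentCLE_le_one (h2p n) ENNReal.ofReal_ne_top)
  have : Infinite (Σ n, Fin (k n)) :=
    Infinite.of_injective (fun n => ⟨n, ⟨0, hk n⟩⟩) fun _ _ h => congrArg Sigma.fst h
  obtain ⟨e⟩ := nonempty_equiv_of_countable (α := Σ n, Fin (k n)) (β := ℕ)
  exact ⟨toEuclidean.trans ((lp.sigmaHilbertBasis ℂ _).reindex e).repr.toContinuousLinearEquiv⟩
end
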